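/- arXiv:1512.06971 — 2 statements merged into one kernel-verified Lean document; each statement's English description precedes it below -/
import Mathlib

section
/- Let 0 < r_w < r_e, h > 0, Q > 0, α > 0, β > 0, λ > 0, 0 ≤ s < 1, A = Q/(2πh(r_e² − r_w²)), v(r) = A·(r_e² − r²)/r. Suppose 0 < v_D ≤ v_F ≤ v(r_w), and r_F, r_D ∈ [r_w, r_e] satisfy v(r_F) = v_F and v(r_D) = v_D (so that r_w ≤ r_F ≤ r_D ≤ r_e). Define g(ξ) = α + βξ for ξ ≥ v_F, g(ξ) = α for v_D ≤ ξ < v_F, and g(ξ) = λ·ξ^{−s} for 0 < ξ < v_D, and set J_FDpD = Q² / (2πh·∫_{r_w}^{r_e} r·g(v(r))·v(r)² dr), L = 2πh(r_e² − r_w²)², S_F[r_w, r_F] = ∫_{r_w}^{r_F} (α + β·A·(r_e² − r²)·r^{−1})·(r_e² − r²)²·r^{−1} dr, S_D[r_F, r_D] = α·∫_{r_F}^{r_D} (r_e² − r²)²·r^{−1} dr, and S_pD[r_D, r_e] = λ·A^{−s}·∫_{r_D}^{r_e} (r_e² − r²)^{2−s}·r^{s−1} dr. Then J_FDpD = L /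 (S_F[r_w, r_F] + S_D[r_F, r_D] + S_pD[r_D, r_e]). -/
/-!
The velocity `v r = A (r_e² - r²) / r` is strictly decreasing, so the three flow regimes occupy the
consecutive intervals `[r_w, r_F]`, `[r_F, r_D]`, `[r_D, r_e]`. On each of them the dissipation
density `r g(v r) (v r)²` is `A²` times the corresponding integrand of `S_F`, `S_D`, `S_pD`, so the
denominator of `J_FDpD` is `2πh A² (S_F + S_D + S_pD)`, and `A = Q / (2πh (r_e² - r_w²))` turns
`Q² / (2πh A² S)` into `L / S`.
-/

open Set MeasureTheory intervalIntegral

theorem strictAntiOn_mul_sq_sub_sq_div {A : ℝ} (hA : 0 < A) (c : ℝ) :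
    StrictAntiOn (fun r => A * (c ^ 2 - r ^ 2) / r) (Ioi 0) := by
  intro x hx y hy hxy
  have hx : 0 < x := hx
  have hy : 0 < y := hy
  have hdiff : A * (c ^ 2 - x ^ 2) / x - A * (c ^ 2 - y ^ 2) / y
      = A * ((y - x) * (c ^ 2 + x * y)) / (x * y) := by
    field_simp; ring
  have : 0 < A * ((y - x) * (c ^ 2 + x * y)) / (x * y) := by
    have : 0 < c ^ 2 + x * y := by positivity
    have : 0 < y - x := by linarith
    positivity
  linarith

theorem continuousOn_forchheimer_integrand (α β A c : ℝ) :
    ContinuousOn (fun r => (α + β * A * (c ^ 2 - r ^ 2) * r⁻¹) * (c ^ 2 - r ^ 2) ^ 2 * r⁻¹)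
      (Ioi 0) := by
  intro r hr
  have : r ≠ 0 := ne_of_gt hr
  exact ContinuousAt.continuousWithinAt (by fun_prop (disch := assumption))

theorem continuousOn_darcy_integrand (c : ℝ) :
    ContinuousOn (fun r => (c ^ 2 - r ^ 2) ^ 2 * r⁻¹) (Ioi 0) := by
  intro r hr
  have : r ≠ 0 := ne_of_gt hr
  exact ContinuousAt.continuousWithinAt (by fun_prop (disch := assumption))

theorem continuousOn_preDarcy_integrand {s : ℝ} (hs : s ≤ 2) (c : ℝ) :
    ContinuousOn (fun r => (c ^ 2 - r ^ 2) ^ (2 - s) * r ^ (s - 1)) (Ioi 0) := by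
  intro r hr
  have : r ≠ 0 := ne_of_gt hr
  have : 0 ≤ 2 - s := by linarith
  exact ContinuousAt.continuousWithinAt
    (by fun_prop (disch := first | exact Or.inl ‹_› | exact Or.inr ‹_›))

section Integrands

variable {α β lam s A c : ℝ} {v g : ℝ → ℝ}

theorem integrand_preDarcy_eq {r b : ℝ} (hr : 0 < r) (hA : 0 < A) (hb : 0 ≤ b) (hs : s < 2) :
    r * (lam * (A * b / r) ^ (-s)) * (A * b / r) ^ 2
      = A ^ 2 * (lam * A ^ (-s) * (b ^ (2 - s) * r ^ (s - 1))) := by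
  have hv : (A * b / r) ^ (-s) * (A * b / r) ^ 2 = A ^ (2 - s) * b ^ (2 - s) / r ^ (2 - s) := by
    rw [← Real.rpow_natCast, ← Real.rpow_add' (by positivity) (by push_cast; linarith),
      Real.div_rpow (by positivity) hr.le, Real.mul_rpow hA.le hb]
    push_cast; ring_nf
  have hA2 : A ^ (2 - s) = A ^ 2 * A ^ (-s) := by
    rw [sub_eq_add_neg, Real.rpow_add hA, Real.rpow_two]
  have hr1 : r ^ (s - 1) = r / r ^ (2 - s) := by
    rw [show s - 1 = 1 - (2 - s) by ring, Real.rpow_sub hr, Real.rpow_one]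
  calc r * (lam * (A * b / r) ^ (-s)) * (A * b / r) ^ 2
      = r * lam * ((A * b / r) ^ (-s) * (A * b / r) ^ 2) := by ring
    _ = _ := by rw [hv, hA2, hr1]; ring

theorem eqOn_forchheimer_integrand (hv : ∀ r, v r = A * (c ^ 2 - r ^ 2) / r) {a b : ℝ}
    (ha : 0 ≤ a) (hg : ∀ r ∈ Ioo a b, g (v r) = α + β * v r) :
    EqOn (fun r => A ^ 2 * ((α + β * A * (c ^ 2 - r ^ 2) * r⁻¹) * (c ^ 2 - r ^ 2) ^ 2 * r⁻¹))
      (fun r => r * g (v r) * v r ^ 2) (Ioo a b) := by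
  intro r hr
  have : r ≠ 0 := (ha.trans_lt hr.1).ne'
  dsimp only
  rw [hg r hr, hv]
  field_simp

theorem eqOn_darcy_integrand (hv : ∀ r, v r = A * (c ^ 2 - r ^ 2) / r) {a b : ℝ}
    (ha : 0 ≤ a) (hg : ∀ r ∈ Ioo a b, g (v r) = α) :
    EqOn (fun r => A ^ 2 * (α * ((c ^ 2 - r ^ 2) ^ 2 * r⁻¹)))
      (fun r => r * g (v r) * v r ^ 2) (Ioo a b) := by
  intro r hr
  have : r ≠ 0 := (ha.trans_lt hr.1).ne'
  dsimp only
  rw [hg r hr, hv]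
  field_simp

theorem eqOn_preDarcy_integrand (hv : ∀ r, v r = A * (c ^ 2 - r ^ 2) / r) (hA : 0 < A)
    (hs : s < 2) {a : ℝ} (ha : 0 ≤ a) (hg : ∀ r ∈ Ioo a c, g (v r) = lam * v r ^ (-s)) :
    EqOn (fun r => A ^ 2 * (lam * A ^ (-s) * ((c ^ 2 - r ^ 2) ^ (2 - s) * r ^ (s - 1))))
      (fun r => r * g (v r) * v r ^ 2) (Ioo a c) := by
  intro r hr
  have hr0 : 0 < r := ha.trans_lt hr.1
  have hb : 0 ≤ c ^ 2 - r ^ 2 := by nlinarith [hr.2]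
  dsimp only
  rw [hg r hr, hv, integrand_preDarcy_eq hr0 hA hb hs]

end Integrands

theorem integral_eq_add_add_of_eqOn_Ioo {f φ₁ φ₂ φ₃ : ℝ → ℝ} {a b c d : ℝ}
    (hab : a ≤ b) (hbc : b ≤ c) (hcd : c ≤ d)
    (hφ₁ : IntervalIntegrable φ₁ volume a b) (hφ₂ : IntervalIntegrable φ₂ volume b c)
    (hφ₃ : IntervalIntegrable φ₃ volume c d)
    (h₁ : EqOn φ₁ f (Ioo a b)) (h₂ : EqOn φ₂ f (Ioo b c)) (h₃ : EqOn φ₃ f (Ioo c d)) :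
    ∫ x in a..d, f x = (∫ x in a..b, φ₁ x) + (∫ x in b..c, φ₂ x) + ∫ x in c..d, φ₃ x := by
  rw [← uIoo_of_le hab] at h₁
  rw [← uIoo_of_le hbc] at h₂
  rw [← uIoo_of_le hcd] at h₃
  have hf₁ := hφ₁.congr_uIoo h₁
  have hf₂ := hφ₂.congr_uIoo h₂
  rw [← integral_add_adjacent_intervals (hf₁.trans hf₂) (hφ₃.congr_uIoo h₃),
    ← integral_add_adjacent_intervals hf₁ hf₂, integral_congr_uIoo h₁, integral_congr_uIoo h₂,
    integral_congr_uIoo h₃]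

theorem sq_div_mul_sq_mul_eq {Q P D A : ℝ} (hQ : Q ≠ 0) (hP : P ≠ 0) (hD : D ≠ 0)
    (hA : A = Q / (P * D)) (S : ℝ) : Q ^ 2 / (P * (A ^ 2 * S)) = P * D ^ 2 / S := by
  rcases eq_or_ne S 0 with rfl | hS
  · simp
  · rw [hA]; field_simp

theorem pi_FDpD_general
    (r_w r_e h Q α β lam s A : ℝ)
    (hrw : 0 < r_w) (hre : r_w < r_e) (hh : 0 < h) (hQ : 0 < Q)
    (hs1 : s < 1)
    (hA : A = Q / (2 * Real.pi * h * (r_e ^ 2 - r_w ^ 2)))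
    (v : ℝ → ℝ) (hv : ∀ r, v r = A * (r_e ^ 2 - r ^ 2) / r)
    (v_D v_F : ℝ) (hvD0 : 0 < v_D) (hvDF : v_D ≤ v_F)
    (r_F r_D : ℝ)
    (hrF : r_F ∈ Set.Icc r_w r_e) (hrD : r_D ∈ Set.Icc r_w r_e)
    (hvrF : v r_F = v_F) (hvrD : v r_D = v_D)
    (g : ℝ → ℝ)
    (hg : ∀ ξ : ℝ, g ξ =
      if v_F ≤ ξ then α + β * ξ else if v_D ≤ ξ then α else lam * ξ ^ (-s)) :
    Q ^ 2 / (2 * Real.pi * h * ∫ r in r_w..r_e, r * g (v r) * v r ^ 2)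
      = 2 * Real.pi * h * (r_e ^ 2 - r_w ^ 2) ^ 2 /
          ((∫ r in r_w..r_F,
              (α + β * A * (r_e ^ 2 - r ^ 2) * r⁻¹) * (r_e ^ 2 - r ^ 2) ^ 2 * r⁻¹) +
            α * (∫ r in r_F..r_D, (r_e ^ 2 - r ^ 2) ^ 2 * r⁻¹) +
            lam * A ^ (-s) *
              ∫ r in r_D..r_e, (r_e ^ 2 - r ^ 2) ^ (2 - s) * r ^ (s - 1)) := by
  have hwe : 0 < r_e ^ 2 - r_w ^ 2 := by nlinarith
  have hA0 : 0 < A := by rw [hA]; positivity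
  have hv_anti : StrictAntiOn v (Ioi 0) := by
    simpa only [← funext hv] using strictAntiOn_mul_sq_sub_sq_div hA0 r_e
  have pos : ∀ {r}, r_w ≤ r → r ∈ Ioi (0 : ℝ) := fun hr => hrw.trans_le hr
  have hFD : r_F ≤ r_D := (hv_anti.le_iff_ge (pos hrD.1) (pos hrF.1)).1 (by rwa [hvrF, hvrD])
  have hDe : r_D < r_e :=
    (hv_anti.lt_iff_gt (pos hre.le) (pos hrD.1)).1 (by rw [hvrD, hv]; simpa using hvD0)
  have hgv : ∀ r, r_w ≤ r →
      g (v r) = if r ≤ r_F then α + β * v r else if r ≤ r_D then α else lam * v r ^ (-s) := by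
    intro r hr
    simp only [hg, ← hvrF, ← hvrD, hv_anti.le_iff_ge (pos hrF.1) (pos hr),
      hv_anti.le_iff_ge (pos hrD.1) (pos hr)]
  have hintegrable : ∀ {φ : ℝ → ℝ} {a b : ℝ}, ContinuousOn φ (Ioi 0) → r_w ≤ a → a ≤ b →
      IntervalIntegrable φ volume a b := fun hφ ha hab =>
    (hφ.mono fun _ hr => pos (ha.trans hr.1)).intervalIntegrable_of_Icc hab
  have hF : ∀ r ∈ Ioo r_w r_F, g (v r) = α + β * v r := fun r hr => by
    rw [hgv r hr.1.le, if_pos hr.2.le]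
  have hD : ∀ r ∈ Ioo r_F r_D, g (v r) = α := fun r hr => by
    rw [hgv r (hrF.1.trans hr.1.le), if_neg hr.1.not_ge, if_pos hr.2.le]
  have hpD : ∀ r ∈ Ioo r_D r_e, g (v r) = lam * v r ^ (-s) := fun r hr => by
    rw [hgv r (hrD.1.trans hr.1.le), if_neg (hFD.trans_lt hr.1).not_ge, if_neg hr.1.not_ge]
  have hs2 : s < 2 := hs1.trans one_lt_two
  rw [integral_eq_add_add_of_eqOn_Ioo hrF.1 hFD hDe.le
    ((hintegrable (continuousOn_forchheimer_integrand α β A r_e) le_rfl hrF.1).const_mul _)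
    (((hintegrable (continuousOn_darcy_integrand r_e) hrF.1 hFD).const_mul _).const_mul _)
    (((hintegrable (continuousOn_preDarcy_integrand hs2.le r_e) hrD.1 hDe.le).const_mul _).const_mul
      _)
    (eqOn_forchheimer_integrand hv hrw.le hF)
    (eqOn_darcy_integrand hv (hrw.trans_le hrF.1).le hD)
    (eqOn_preDarcy_integrand hv hA0 hs2 (hrw.trans_le hrD.1).le hpD)]
  simp only [intervalIntegral.integral_const_mul, ← mul_add]
  exact sq_div_mul_sq_mul_eq hQ.ne' (by positivity) hwe.ne' hA _

/-- Proposition 3.2, Forchheimer–Darcy–pre-Darcy (FDpD) case, the main analytical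
result: `J_FDpD = L / (S_F[r_w, r_F] + S_D[r_F, r_D] + S_pD[r_D, r_e])`. -/
theorem pi_FDpD
    (r_w r_e h Q α β lam s A : ℝ)
    (hrw : 0 < r_w) (hre : r_w < r_e) (hh : 0 < h) (hQ : 0 < Q)
    (hα : 0 < α) (hβ : 0 < β) (hlam : 0 < lam) (hs0 : 0 ≤ s) (hs1 : s < 1)
    (hA : A = Q / (2 * Real.pi * h * (r_e ^ 2 - r_w ^ 2)))
    (v : ℝ → ℝ) (hv : ∀ r, v r = A * (r_e ^ 2 - r ^ 2) / r)
    (v_D v_F : ℝ) (hvD0 : 0 < v_D) (hvDF : v_D ≤ v_F) (hvFw : v_F ≤ v r_w)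
    (r_F r_D : ℝ)
    (hrF : r_F ∈ Set.Icc r_w r_e) (hrD : r_D ∈ Set.Icc r_w r_e)
    (hvrF : v r_F = v_F) (hvrD : v r_D = v_D)
    (g : ℝ → ℝ)
    (hg : ∀ ξ : ℝ, g ξ =
      if v_F ≤ ξ then α + β * ξ else if v_D ≤ ξ then α else lam * ξ ^ (-s)) :
    Q ^ 2 / (2 * Real.pi * h * ∫ r in r_w..r_e, r * g (v r) * v r ^ 2)
      = 2 * Real.pi * h * (r_e ^ 2 - r_w ^ 2) ^ 2 /
          ((∫ r in r_w..r_F,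
              (α + β * A * (r_e ^ 2 - r ^ 2) * r⁻¹) * (r_e ^ 2 - r ^ 2) ^ 2 * r⁻¹) +
            α * (∫ r in r_F..r_D, (r_e ^ 2 - r ^ 2) ^ 2 * r⁻¹) +
            lam * A ^ (-s) *
              ∫ r in r_D..r_e, (r_e ^ 2 - r ^ 2) ^ (2 - s) * r ^ (s - 1)) :=
  pi_FDpD_general r_w r_e h Q α β lam s A hrw hre hh hQ hs1 hA v hv v_D v_F hvD0 hvDF r_F r_D hrF
    hrD hvrF hvrD g hg
end

section
/- Let 0 < r_w < r_e, h > 0, Q > 0, α > 0, λ > 0, 0 ≤ s < 1, A = Q/(2πh(r_e² − r_w²)), v(r) = A·(r_e² − r²)/r. Suppose 0 < v_D ≤ v(r_w) and r_D ∈ [r_w, r_e] satisfies v(r_D) = v_D. Define g(ξ) = α for ξ ≥ v_D and g(ξ) = λ·ξ^{−s} for 0 < ξ < v_D, J_DDpD = Q²/(2πh·∫_{r_w}^{r_e} r·g(v(r))·v(r)² dr), J_D = Q²/(2πh·∫_{r_w}^{r_e} r·α·v(r)² dr), S_D[r_1, r_2] = α·∫_{r_1}^{r_2} (r_e² − r²)²·r^{−1}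 dr and S_pD[r_D, r_e] = λ·A^{−s}·∫_{r_D}^{r_e} (r_e² − r²)^{2−s}·r^{s−1} dr. Then J_DDpD = J_D · S_D[r_w, r_e] / (S_D[r_w, r_D] + S_pD[r_D, r_e]). -/
/-!
Write `v(r) = A u(r) / r` with `u(r) = r_e² − r²`. Since `v` is strictly decreasing, the law `g` is
Darcy on `(r_w, r_D)` and pre-Darcy on `(r_D, r_e)`, and on each zone `r g(v) v²` is `A²` times the
integrand of `S_D` resp. `S_pD` (for the latter, `v^{-s} v² = v^{2-s}` splits into powers of `A`, `u`
and `r`). Hence both integrals defining the productivity indices are `A²` times the corresponding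
`S`, and the factors `Q²`, `2πh`, `A²` cancel in the quotient `J_DDpD / J_D`.
-/

open Real Set MeasureTheory

theorem intervalIntegral.integral_eq_add_of_eqOn_uIoo {f F₁ F₂ : ℝ → ℝ} {a b c : ℝ}
    (h₁ : EqOn f F₁ (uIoo a c)) (h₂ : EqOn f F₂ (uIoo c b))
    (hF₁ : IntervalIntegrable F₁ volume a c) (hF₂ : IntervalIntegrable F₂ volume c b) :
    ∫ x in a..b, f x = (∫ x in a..c, F₁ x) + ∫ x in c..b, F₂ x := by
  rw [← integral_add_adjacent_intervals ((intervalIntegrable_congr_uIoo h₁).mpr hF₁)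
      ((intervalIntegrable_congr_uIoo h₂).mpr hF₂), integral_congr_uIoo h₁, integral_congr_uIoo h₂]

theorem Real.rpow_neg_mul_sq {x : ℝ} (hx : 0 ≤ x) {s : ℝ} (hs : s ≠ 2) :
    x ^ (-s) * x ^ 2 = x ^ (2 - s) := by
  rw [← rpow_two, ← rpow_add' hx (by contrapose! hs; linarith)]
  ring_nf

/-- Only `k ≠ 0` is needed: if `c`, `a` or `d` vanishes, both sides are `0` since `x / 0 = 0`. -/
lemma div_mul_mul_eq_div_mul_mul_mul_div {K : Type*} [Field K] (x c a d : K) {k : K} (hk : k ≠ 0) :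
    x / (c * (a * d)) = x / (c * (a * k)) * k / d := by
  field_simp

section Kernels

variable {a b c : ℝ}

lemma intervalIntegrable_sub_sq_sq_mul_inv (ha : 0 < a) (hb : 0 < b) :
    IntervalIntegrable (fun r => (c - r ^ 2) ^ 2 * r⁻¹) volume a b := by
  refine ContinuousOn.intervalIntegrable (ContinuousOn.mul (by fun_prop) ?_)
  exact continuousOn_inv₀.mono fun x hx => (lt_min ha hb |>.trans_le hx.1).ne'

lemma intervalIntegrable_sub_sq_rpow_mul_rpow {p : ℝ} (hp : 0 ≤ p) (q : ℝ) (ha : 0 < a)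
    (hb : 0 < b) : IntervalIntegrable (fun r => (c - r ^ 2) ^ p * r ^ q) volume a b := by
  refine ContinuousOn.intervalIntegrable (ContinuousOn.mul ?_ ?_)
  · exact ContinuousOn.rpow_const (by fun_prop) fun _ _ => Or.inr hp
  · exact ContinuousOn.rpow_const continuousOn_id fun x hx =>
      Or.inl (lt_min ha hb |>.trans_le hx.1).ne'

lemma integral_sub_sq_sq_mul_inv_pos (ha : 0 < a) (hab : a < b) :
    0 < ∫ r in a..b, (b ^ 2 - r ^ 2) ^ 2 * r⁻¹ := by
  refine intervalIntegral.intervalIntegral_pos_of_pos_on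
    (intervalIntegrable_sub_sq_sq_mul_inv ha (ha.trans hab)) (fun r ⟨har, hrb⟩ => ?_) hab
  have hr : 0 < r := ha.trans har
  have hu : 0 < b ^ 2 - r ^ 2 := by nlinarith
  positivity

end Kernels

section Velocity

variable {A r_e : ℝ}

lemma velocity_strictAntiOn (hA : 0 < A) :
    StrictAntiOn (fun r => A * (r_e ^ 2 - r ^ 2) / r) (Ioi 0) := by
  intro x hx y hy hxy
  simp only [mem_Ioi] at hx hy ⊢
  rw [div_lt_div_iff₀ hy hx]
  nlinarith [mul_pos hA (mul_pos (sub_pos.2 hxy)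
    (add_pos_of_nonneg_of_pos (sq_nonneg r_e) (mul_pos hx hy)))]

lemma darcy_integrand_eq {u r : ℝ} (α : ℝ) (hr : r ≠ 0) :
    r * α * (A * u / r) ^ 2 = α * A ^ 2 * (u ^ 2 * r⁻¹) := by
  field_simp

lemma preDarcy_integrand_eq {u r s : ℝ} (hA : 0 ≤ A) (hu : 0 ≤ u) (hr : 0 < r) (hs : s ≠ 2) :
    r * (A * u / r) ^ (-s) * (A * u / r) ^ 2 = A ^ 2 * A ^ (-s) * (u ^ (2 - s) * r ^ (s - 1)) := by
  have h2s : 2 + -s ≠ 0 := by contrapose! hs; linarith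
  rw [mul_assoc, rpow_neg_mul_sq (by positivity) hs, div_rpow (by positivity) hr.le,
    mul_rpow hA hu, sub_eq_add_neg, rpow_add' hA h2s, rpow_two,
    show s - 1 = 1 - (2 + -s) by ring, rpow_sub hr, rpow_one]
  ring

end Velocity

section Integrals

variable {r_w r_e A : ℝ} {v : ℝ → ℝ}

lemma integral_darcy (hrw : 0 < r_w) (hre : r_w < r_e) (hv : ∀ r, v r = A * (r_e ^ 2 - r ^ 2) / r)
    (α : ℝ) : ∫ r in r_w..r_e, r * α * v r ^ 2
      = A ^ 2 * (α * ∫ r in r_w..r_e, (r_e ^ 2 - r ^ 2) ^ 2 * r⁻¹) := by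
  calc ∫ r in r_w..r_e, r * α * v r ^ 2
      = ∫ r in r_w..r_e, α * A ^ 2 * ((r_e ^ 2 - r ^ 2) ^ 2 * r⁻¹) :=
        intervalIntegral.integral_congr fun r hr => by
          rw [uIcc_of_le hre.le] at hr
          rw [hv, darcy_integrand_eq α (hrw.trans_le hr.1).ne']
    _ = _ := by rw [intervalIntegral.integral_const_mul]; ring

lemma integral_darcy_preDarcy {α lam s v_D r_D : ℝ} {g : ℝ → ℝ} (hrw : 0 < r_w) (hA : 0 < A)
    (hs : s < 2) (hv : ∀ r, v r = A * (r_e ^ 2 - r ^ 2) / r) (hrD : r_D ∈ Icc r_w r_e)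
    (hvrD : v r_D = v_D) (hg : ∀ ξ, g ξ = if v_D ≤ ξ then α else lam * ξ ^ (-s)) :
    ∫ r in r_w..r_e, r * g (v r) * v r ^ 2
      = A ^ 2 * (α * (∫ r in r_w..r_D, (r_e ^ 2 - r ^ 2) ^ 2 * r⁻¹) +
          lam * A ^ (-s) * ∫ r in r_D..r_e, (r_e ^ 2 - r ^ 2) ^ (2 - s) * r ^ (s - 1)) := by
  obtain ⟨hwD, hDe⟩ := hrD
  have hD : 0 < r_D := hrw.trans_le hwD
  have hanti : StrictAntiOn v (Ioi 0) := funext hv ▸ velocity_strictAntiOn hA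
  rw [intervalIntegral.integral_eq_add_of_eqOn_uIoo (c := r_D)
    (F₁ := fun r => α * A ^ 2 * ((r_e ^ 2 - r ^ 2) ^ 2 * r⁻¹))
    (F₂ := fun r => A ^ 2 * (lam * A ^ (-s)) * ((r_e ^ 2 - r ^ 2) ^ (2 - s) * r ^ (s - 1)))
    ?darcy ?preDarcy ?_ ?_, intervalIntegral.integral_const_mul, intervalIntegral.integral_const_mul]
  · ring
  case darcy =>
    rw [uIoo_of_le hwD]
    rintro r ⟨hwr, hrD⟩
    have hr : 0 < r := hrw.trans hwr
    have hvD : v_D ≤ v r := (hvrD ▸ hanti hr hD hrD).le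
    dsimp only
    rw [hg, if_pos hvD, hv, darcy_integrand_eq α hr.ne']
  case preDarcy =>
    rw [uIoo_of_le hDe]
    rintro r ⟨hDr, hre⟩
    have hr : 0 < r := hD.trans hDr
    have hvD : v r < v_D := hvrD ▸ hanti hD hr hDr
    dsimp only
    rw [hg, if_neg hvD.not_ge, hv]
    linear_combination lam * preDarcy_integrand_eq hA.le
      (sub_nonneg.2 (pow_le_pow_left₀ hr.le hre.le 2)) hr hs.ne
  · exact (intervalIntegrable_sub_sq_sq_mul_inv hrw hD).const_mul _
  · exact (intervalIntegrable_sub_sq_rpow_mul_rpow (by linarith) _ hD (hD.trans_le hDe)).const_mul _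

end Integrals

theorem pi_DDpD_through_darcy_general
    (r_w r_e h Q α lam s A : ℝ)
    (hrw : 0 < r_w) (hre : r_w < r_e)
    (hα : 0 < α) (hs1 : s < 1)
    (v : ℝ → ℝ) (hv : ∀ r, v r = A * (r_e ^ 2 - r ^ 2) / r)
    (v_D : ℝ) (hvD0 : 0 < v_D) (hvDw : v_D ≤ v r_w)
    (r_D : ℝ) (hrD : r_D ∈ Set.Icc r_w r_e) (hvrD : v r_D = v_D)
    (g : ℝ → ℝ) (hg : ∀ ξ : ℝ, g ξ = if v_D ≤ ξ then α else lam * ξ ^ (-s)) :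
    Q ^ 2 / (2 * Real.pi * h * ∫ r in r_w..r_e, r * g (v r) * v r ^ 2)
      = (Q ^ 2 / (2 * Real.pi * h * ∫ r in r_w..r_e, r * α * v r ^ 2)) *
          (α * ∫ r in r_w..r_e, (r_e ^ 2 - r ^ 2) ^ 2 * r⁻¹) /
          (α * (∫ r in r_w..r_D, (r_e ^ 2 - r ^ 2) ^ 2 * r⁻¹) +
            lam * A ^ (-s) *
              ∫ r in r_D..r_e, (r_e ^ 2 - r ^ 2) ^ (2 - s) * r ^ (s - 1)) := by
  have hA : 0 < A := by
    have hvw : 0 < A * (r_e ^ 2 - r_w ^ 2) / r_w := hv r_w ▸ hvD0.trans_le hvDw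
    exact pos_of_mul_pos_left ((div_pos_iff_of_pos_right hrw).1 hvw) (by nlinarith)
  have hk : α * ∫ r in r_w..r_e, (r_e ^ 2 - r ^ 2) ^ 2 * r⁻¹ ≠ 0 :=
    (mul_pos hα (integral_sub_sq_sq_mul_inv_pos hrw hre)).ne'
  rw [integral_darcy_preDarcy hrw hA (by linarith) hv hrD hvrD hg, integral_darcy hrw hre hv]
  exact div_mul_mul_eq_div_mul_mul_mul_div _ _ _ _ hk

/-- Proposition 3.3, Darcy–Darcy–pre-Darcy (DDpD) case:
`J_DDpD = J_D · S_D[r_w, r_e] / (S_D[r_w, r_D] + S_pD[r_D, r_e])`. -/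
theorem pi_DDpD_through_darcy
    (r_w r_e h Q α lam s A : ℝ)
    (hrw : 0 < r_w) (hre : r_w < r_e) (hh : 0 < h) (hQ : 0 < Q)
    (hα : 0 < α) (hlam : 0 < lam) (hs0 : 0 ≤ s) (hs1 : s < 1)
    (hA : A = Q / (2 * Real.pi * h * (r_e ^ 2 - r_w ^ 2)))
    (v : ℝ → ℝ) (hv : ∀ r, v r = A * (r_e ^ 2 - r ^ 2) / r)
    (v_D : ℝ) (hvD0 : 0 < v_D) (hvDw : v_D ≤ v r_w)
    (r_D : ℝ) (hrD : r_D ∈ Set.Icc r_w r_e) (hvrD : v r_D = v_D)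
    (g : ℝ → ℝ) (hg : ∀ ξ : ℝ, g ξ = if v_D ≤ ξ then α else lam * ξ ^ (-s)) :
    Q ^ 2 / (2 * Real.pi * h * ∫ r in r_w..r_e, r * g (v r) * v r ^ 2)
      = (Q ^ 2 / (2 * Real.pi * h * ∫ r in r_w..r_e, r * α * v r ^ 2)) *
          (α * ∫ r in r_w..r_e, (r_e ^ 2 - r ^ 2) ^ 2 * r⁻¹) /
          (α * (∫ r in r_w..r_D, (r_e ^ 2 - r ^ 2) ^ 2 * r⁻¹) +
            lam * A ^ (-s) *
              ∫ r in r_D..r_e, (r_e ^ 2 - r ^ 2) ^ (2 - s) * r ^ (s - 1)) :=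
  pi_DDpD_through_darcy_general r_w r_e h Q α lam s A hrw hre hα hs1 v hv v_D hvD0 hvDw r_D hrD hvrD
    g hg
end
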